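/- arXiv:0804.2512 — 3 statements merged into one kernel-verified Lean document; each statement's English description precedes it below -/
import Mathlib

section
/- Let γ(λ) be the inverse of γ ↦ exp(ψ(γ)) on (0,∞). Then as λ → +∞, γ(λ) = λ + o(λ); equivalently, lim_{λ→∞} γ(λ)/λ = 1. -/
open Real Filter

/-- The digamma function `ψ = Γ'/Γ`. -/
noncomputable def digamma (x : ℝ) : ℝ := deriv Real.Gamma x / Real.Gamma x

/-!
On `(0, ∞)` the digamma function is the derivative of the convex function `log Γ`, whose
slope over `[x, x + 1]` is `log x` because `Γ (x + 1) = x Γ x`. Convexity therefore gives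
`ψ x ≤ log x ≤ ψ (x + 1)`. If `ψ γ = log λ`, this traps `γ` in `[λ, λ + 1]`, so `γ / λ → 1`.
-/

open Asymptotics Topology

theorem hasDerivAt_log_Gamma {x : ℝ} (hx : 0 < x) :
    HasDerivAt (log ∘ Gamma) (digamma x) x := by
  have hx_ne : ∀ m : ℕ, x ≠ -m := fun m => by
    linarith [(Nat.cast_nonneg m : (0 : ℝ) ≤ m)]
  exact (differentiableAt_Gamma hx_ne).hasDerivAt.log (Gamma_pos_of_pos hx).ne'

theorem slope_log_Gamma_add_one {x : ℝ} (hx : 0 < x) :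
    slope (log ∘ Gamma) x (x + 1) = log x := by
  rw [slope_def_field, Function.comp_apply, Function.comp_apply, Gamma_add_one hx.ne',
    log_mul hx.ne' (Gamma_pos_of_pos hx).ne']
  ring

theorem digamma_le_log {x : ℝ} (hx : 0 < x) : digamma x ≤ log x := by
  have h := convexOn_log_Gamma.le_slope_of_hasDerivAt hx
    (show 0 < x + 1 by linarith) (lt_add_one x) (hasDerivAt_log_Gamma hx)
  rwa [slope_log_Gamma_add_one hx] at h

theorem log_le_digamma_add_one {x : ℝ} (hx : 0 < x) : log x ≤ digamma (x + 1) := by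
  have h := convexOn_log_Gamma.slope_le_of_hasDerivAt hx
    (show 0 < x + 1 by linarith) (lt_add_one x)
    (hasDerivAt_log_Gamma (by linarith))
  rwa [slope_log_Gamma_add_one hx] at h

theorem le_and_le_add_one_of_digamma_eq_log {x y : ℝ} (hx : 0 < x) (hy : 0 < y)
    (h : digamma x = log y) : y ≤ x ∧ x ≤ y + 1 := by
  have hyx : y ≤ x := (log_le_log_iff hy hx).mp (h ▸ digamma_le_log hx)
  refine ⟨hyx, ?_⟩
  by_cases hx1 : x ≤ 1
  · linarith
  · have hx_sub : 0 < x - 1 := by linarith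
    have h' := log_le_digamma_add_one hx_sub
    rw [sub_add_cancel, h] at h'
    linarith [(log_le_log_iff hx_sub hy).mp h']

theorem tendsto_div_self_of_sub_isBigO_one {f : ℝ → ℝ}
    (h : (fun t => f t - t) =O[atTop] (fun _ => (1 : ℝ))) :
    Tendsto (fun t => f t / t) atTop (𝓝 1) :=
  (isEquivalent_iff_tendsto_one (eventually_ne_atTop 0)).mp
    (h.trans_isLittleO (isLittleO_const_id_atTop 1))

theorem gamma_of_lam_asymp_at_top (γfun : ℝ → ℝ)
    (hγ : ∀ lam : ℝ, 0 < lam →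
      0 < γfun lam ∧ Real.exp (digamma (γfun lam)) = lam) :
    Filter.Tendsto (fun lam : ℝ => γfun lam / lam) Filter.atTop (nhds 1) := by
  refine tendsto_div_self_of_sub_isBigO_one (IsBigO.of_bound 1 ?_)
  filter_upwards [eventually_gt_atTop 0] with lam hlam
  obtain ⟨hγ_pos, hexp⟩ := hγ lam hlam
  have hψ : digamma (γfun lam) = log lam := by rw [← log_exp (digamma _), hexp]
  obtain ⟨hlow, hup⟩ := le_and_le_add_one_of_digamma_eq_log hγ_pos hlam hψ
  rw [norm_one, mul_one, Real.norm_eq_abs, abs_le]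
  constructor <;> linarith
end

section
/- For every λ > 0 and every n ≥ 1, the function F_n(λ) = ∫_{H_n} exp(-λ Σ_{k=1}^n e^{x_k}) dx is finite, positive, and strictly decreasing in λ on (0, ∞). -/
open MeasureTheory Real Set

/-- The Mellin–Barnes function `F n λ`. -/
noncomputable def MellinBarnesF (n : ℕ) (lam : ℝ) : ℝ :=
  ∫ x : Fin (n - 1) → ℝ,
    Real.exp (-lam * ((∑ k, Real.exp (x k)) + Real.exp (-∑ k, x k)))

/-!
In the chart `xₙ = -∑_{k<n} xₖ` of `Hₙ` the exponent is `phase x = ∑ e^{xₖ} + e^{-∑ xₖ}`, and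
every coordinate satisfies `|xⱼ| ≤ phase x`: `xⱼ ≤ e^{xⱼ}`, while `-xⱼ` is the sum of the other
coordinates and of `-∑ xₖ`, each bounded by its exponential. Hence `e^{-λ phase}` is dominated by
a product of one-dimensional integrable functions `e^{-c|xⱼ|}`. Positivity and strict decrease
hold because the integrand is positive and strictly decreasing in `λ` at every point.
-/

theorem integrable_exp_neg_mul_abs {c : ℝ} (hc : 0 < c) :
    Integrable (fun x : ℝ => exp (-c * |x|)) := by
  have hIci : IntegrableOn (fun x : ℝ => exp (-c * |x|)) (Ici 0) := by
    rw [integrableOn_Ici_iff_integrableOn_Ioi]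
    exact (exp_neg_integrableOn_Ioi 0 hc).congr_fun
      (fun x hx => by simp [abs_of_pos (mem_Ioi.mp hx)]) measurableSet_Ioi
  have hIic : IntegrableOn (fun x : ℝ => exp (-c * |x|)) (Iic 0) := by
    rw [← Measure.map_neg_eq_self (volume : Measure ℝ),
      measurableEmbedding_neg.integrableOn_map_iff]
    simpa [Function.comp_def, neg_preimage] using hIci
  simpa [Iic_union_Ici] using hIic.union hIci

theorem integral_lt_integral_of_forall_lt {α : Type*} [MeasurableSpace α] {μ : Measure α}
    [NeZero μ] {f g : α → ℝ} (hf : Integrable f μ) (hg : Integrable g μ)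
    (hfg : ∀ x, f x < g x) : ∫ x, f x ∂μ < ∫ x, g x ∂μ := by
  rw [← sub_pos, ← integral_sub hg hf,
    integral_pos_iff_support_of_nonneg (fun x => sub_nonneg.2 (hfg x).le) (hg.sub hf)]
  have hsupp : Function.support (fun x => g x - f x) = univ :=
    eq_univ_of_forall fun x => (sub_pos.2 (hfg x)).ne'
  simp [hsupp, NeZero.ne μ]

theorem self_le_exp (t : ℝ) : t ≤ exp t := by
  linarith [add_one_le_exp t]

namespace MellinBarnes

variable {ι : Type*} [Fintype ι]

noncomputable def phase (x : ι → ℝ) : ℝ :=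
  (∑ k, exp (x k)) + exp (-∑ k, x k)

theorem phase_pos (x : ι → ℝ) : 0 < phase x :=
  add_pos_of_nonneg_of_pos (Finset.sum_nonneg fun _ _ => (exp_pos _).le) (exp_pos _)

@[fun_prop]
theorem continuous_phase : Continuous (phase : (ι → ℝ) → ℝ) := by
  unfold phase
  fun_prop

theorem abs_le_phase (x : ι → ℝ) (j : ι) : |x j| ≤ phase x := by
  classical
  have hexp_le_sum : ∀ s : Finset ι, ∑ k ∈ s, exp (x k) ≤ ∑ k, exp (x k) := fun s =>
    Finset.sum_le_sum_of_subset_of_nonneg s.subset_univ fun _ _ _ => (exp_pos _).le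
  rw [abs_le, phase]
  constructor
  · have hneg : -x j = (∑ k ∈ Finset.univ.erase j, x k) + -∑ k, x k := by
      rw [Finset.sum_erase_eq_sub (Finset.mem_univ j)]
      ring
    have hrest : ∑ k ∈ Finset.univ.erase j, x k ≤ ∑ k ∈ Finset.univ.erase j, exp (x k) :=
      Finset.sum_le_sum fun k _ => self_le_exp (x k)
    linarith [hexp_le_sum (Finset.univ.erase j), self_le_exp (-∑ k, x k)]
  · linarith [hexp_le_sum {j}, Finset.sum_singleton (fun k => exp (x k)) j, self_le_exp (x j),
      exp_pos (-∑ k, x k)]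

theorem exp_neg_mul_phase_le_prod {lam : ℝ} (hlam : 0 < lam) (x : ι → ℝ) :
    exp (-lam * phase x) ≤ ∏ j, exp (-(lam / (Fintype.card ι + 1)) * |x j|) := by
  set c := lam / (Fintype.card ι + 1)
  have hc : 0 < c := by positivity
  have hcard_c : Fintype.card ι * c ≤ lam := by
    rw [mul_div_assoc', div_le_iff₀ (by positivity)]
    nlinarith
  calc exp (-lam * phase x)
      ≤ exp (-(Fintype.card ι * c) * phase x) := by
        gcongr
        exact (phase_pos x).le
    _ = ∏ _j : ι, exp (-c * phase x) := by
        rw [Finset.prod_const, Finset.card_univ, ← exp_nat_mul]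
        ring_nf
    _ ≤ ∏ j, exp (-c * |x j|) :=
        Finset.prod_le_prod (fun _ _ => (exp_pos _).le) fun j _ =>
          exp_le_exp.2 (by nlinarith [abs_le_phase x j])

theorem integrable_exp_neg_mul_phase {lam : ℝ} (hlam : 0 < lam) :
    Integrable (fun x : ι → ℝ => exp (-lam * phase x)) := by
  refine (Integrable.fintype_prod fun _ =>
    integrable_exp_neg_mul_abs (c := lam / (Fintype.card ι + 1)) (by positivity)).mono
    (by fun_prop) (Filter.Eventually.of_forall fun x => ?_)
  rw [norm_of_nonneg (exp_pos _).le, norm_of_nonneg (Finset.prod_nonneg fun _ _ => (exp_pos _).le)]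
  exact exp_neg_mul_phase_le_prod hlam x

end MellinBarnes

open MellinBarnes

theorem F_finite_pos_strictAnti_general (n : ℕ) :
    (∀ lam : ℝ, 0 < lam →
      MeasureTheory.Integrable (fun x : Fin (n - 1) → ℝ =>
        Real.exp (-lam * ((∑ k, Real.exp (x k)) + Real.exp (-∑ k, x k))))) ∧
    (∀ lam : ℝ, 0 < lam → 0 < MellinBarnesF n lam) ∧
    StrictAntiOn (MellinBarnesF n) (Set.Ioi 0) := by
  have hint : ∀ lam : ℝ, 0 < lam →
      Integrable (fun x : Fin (n - 1) → ℝ => exp (-lam * phase x)) :=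
    fun _ => integrable_exp_neg_mul_phase
  refine ⟨hint, fun lam hlam => integral_exp_pos (hint lam hlam), ?_⟩
  intro a ha b hb hab
  exact integral_lt_integral_of_forall_lt (hint b hb) (hint a ha) fun x =>
    exp_lt_exp.2 (mul_lt_mul_of_pos_right (neg_lt_neg hab) (phase_pos x))

theorem F_finite_pos_strictAnti (n : ℕ) (hn : 1 ≤ n) :
    (∀ lam : ℝ, 0 < lam →
      MeasureTheory.Integrable (fun x : Fin (n - 1) → ℝ =>
        Real.exp (-lam * ((∑ k, Real.exp (x k)) + Real.exp (-∑ k, x k))))) ∧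
    (∀ lam : ℝ, 0 < lam → 0 < MellinBarnesF n lam) ∧
    StrictAntiOn (MellinBarnesF n) (Set.Ioi 0) :=
  F_finite_pos_strictAnti_general n
end

section
/- For any positive reals f_1, ..., f_n with geometric mean ρ = (∏ f_k)^{1/n}, the substitution y_k ↦ ρ y_k / f_k maps the hypersphere M_{n,r} = {y ∈ ℝ_{>0}^n : ∏ y_k = r^n} bijectively onto itself and preserves the multiplicative Haar measure m_n; consequently ∫_{M_{n,r}} exp(-Σ f_k y_k) dm_n(y) = ∫_{M_{n,r}} exp(-ρ Σ y_k) dm_n(y). -/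
open MeasureTheory Real Set

/-! The substitution is multiplication by the vector `a = ρ / f`, whose coordinates are positive
with product `1`, so it preserves every level set of `∏ y_k`, with inverse multiplication by `a⁻¹`.
In the hyperplane coordinates `x_k = log (y_k / r)` it is the translation by `log a`
(the last coordinate absorbing `∏_{k<n-1} a_k = (a_{n-1})⁻¹`), which preserves Lebesgue measure. -/

/-- The point of the hypersphere `M_{n,r}` corresponding to the coordinates
`x ∈ ℝ^{n-1}` on the hyperplane `{Σ x_k = 0}`: `y_k = r·exp(x_k)` for
`k < n - 1` and `y_{n-1} = r·exp(-Σ x_j)`. -/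
noncomputable def hypersphereCoord (n : ℕ) (r : ℝ) (x : Fin (n - 1) → ℝ)
    (k : Fin n) : ℝ :=
  if h : (k : ℕ) < n - 1 then r * Real.exp (x ⟨k, h⟩)
  else r * Real.exp (-∑ j, x j)

-- The hypersphere `M_{n,r}` is `prodLevelSet (Fin n) (r ^ n)`.
def prodLevelSet (ι : Type*) [Fintype ι] (c : ℝ) : Set (ι → ℝ) :=
  {y | (∀ k, 0 < y k) ∧ ∏ k, y k = c}

section ProdLevelSet

variable {ι : Type*} [Fintype ι]

theorem mapsTo_mul_prodLevelSet {a : ι → ℝ} (ha : ∀ k, 0 < a k) (hprod : ∏ k, a k = 1)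
    (c : ℝ) : MapsTo (a * ·) (prodLevelSet ι c) (prodLevelSet ι c) := by
  rintro y ⟨hy, rfl⟩
  exact ⟨fun k => mul_pos (ha k) (hy k), by simp [Finset.prod_mul_distrib, hprod]⟩

theorem bijOn_mul_prodLevelSet {a : ι → ℝ} (ha : ∀ k, 0 < a k) (hprod : ∏ k, a k = 1)
    (c : ℝ) : BijOn (a * ·) (prodLevelSet ι c) (prodLevelSet ι c) := by
  have hinv : InvOn (a⁻¹ * ·) (a * ·) (prodLevelSet ι c) (prodLevelSet ι c) :=
    ⟨fun y _ => funext fun k => inv_mul_cancel_left₀ (ha k).ne' (y k),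
      fun y _ => funext fun k => mul_inv_cancel_left₀ (ha k).ne' (y k)⟩
  refine hinv.bijOn (mapsTo_mul_prodLevelSet ha hprod c) (mapsTo_mul_prodLevelSet ?_ ?_ c)
  · exact fun k => inv_pos.mpr (ha k)
  · simp [Finset.prod_inv_distrib, hprod]

theorem prod_geomMean_div_eq_one {f : ι → ℝ} (hf : ∀ k, 0 < f k) :
    ∏ k, (∏ j, f j) ^ ((1 : ℝ) / Fintype.card ι) / f k = 1 := by
  rcases isEmpty_or_nonempty ι with _ | _
  · simp
  have hprod : 0 < ∏ j, f j := Finset.prod_pos fun j _ => hf j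
  rw [Finset.prod_div_distrib, Finset.prod_const, Finset.card_univ, one_div,
    Real.rpow_inv_natCast_pow hprod.le Fintype.card_ne_zero, div_self hprod.ne']

end ProdLevelSet

theorem hypersphereCoord_add_log (m : ℕ) (r : ℝ) {a : Fin (m + 1) → ℝ} (ha : ∀ k, 0 < a k)
    (hprod : ∏ k, a k = 1) (x : Fin m → ℝ) :
    hypersphereCoord (m + 1) r (x + fun j => log (a j.castSucc)) =
      a * hypersphereCoord (m + 1) r x := by
  have hinit : ∏ j : Fin m, a j.castSucc = (a (Fin.last m))⁻¹ := by
    rw [Fin.prod_univ_castSucc] at hprod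
    exact eq_inv_of_mul_eq_one_left hprod
  have hsum : ∑ j : Fin m, log (a j.castSucc) = -log (a (Fin.last m)) := by
    rw [← log_prod fun j _ => (ha _).ne', hinit, log_inv]
  funext k
  induction k using Fin.lastCases <;>
    simp [hypersphereCoord, Finset.sum_add_distrib, hsum, exp_add, exp_log (ha _)] <;> ring

theorem integral_comp_mul_hypersphereCoord {E : Type*} [NormedAddCommGroup E]
    [NormedSpace ℝ E] (n : ℕ) (r : ℝ) {a : Fin n → ℝ} (ha : ∀ k, 0 < a k)
    (hprod : ∏ k, a k = 1) (F : (Fin n → ℝ) → E) :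
    ∫ x : Fin (n - 1) → ℝ, F (a * hypersphereCoord n r x) =
      ∫ x : Fin (n - 1) → ℝ, F (hypersphereCoord n r x) := by
  cases n with
  | zero => congr with x; exact congrArg F (Subsingleton.elim _ _)
  | succ m =>
    simp only [← hypersphereCoord_add_log m r ha hprod]
    exact integral_add_right_eq_self (fun x => F (hypersphereCoord (m + 1) r x)) _

theorem substitution_preserves_hypersphere_and_integral_general
    (n : ℕ) (r : ℝ)
    (f : Fin n → ℝ) (hf : ∀ k, 0 < f k) :
    -- the substitution `y_k ↦ ρ y_k / f_k` maps `M_{n,r}` bijectively onto itself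
    (Set.BijOn (fun y : Fin n → ℝ => fun k => (∏ j, f j) ^ ((1 : ℝ) / n) * y k / f k)
      {y : Fin n → ℝ | (∀ k, 0 < y k) ∧ ∏ k, y k = r ^ n}
      {y : Fin n → ℝ | (∀ k, 0 < y k) ∧ ∏ k, y k = r ^ n}) ∧
    -- consequently the Laplace transform depends only on the geometric mean:
    -- in the coordinates `x` on the hyperplane the measure `m_n` is Lebesgue measure
    (∫ x : Fin (n - 1) → ℝ,
        Real.exp (-∑ k : Fin n, f k * hypersphereCoord n r x k)) =
      ∫ x : Fin (n - 1) → ℝ,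
        Real.exp (-(∏ j, f j) ^ ((1 : ℝ) / n) *
          ∑ k : Fin n, hypersphereCoord n r x k) := by
  set ρ := (∏ j, f j) ^ ((1 : ℝ) / n)
  have hscale_pos : ∀ k, 0 < ρ / f k :=
    fun k => div_pos (rpow_pos_of_pos (Finset.prod_pos fun j _ => hf j) _) (hf k)
  have hscale_prod : ∏ k, ρ / f k = 1 := by
    simpa only [Fintype.card_fin] using prod_geomMean_div_eq_one hf
  have hsubst : (fun y : Fin n → ℝ => fun k => ρ * y k / f k) = ((ρ / f ·) * ·) := by
    funext y k
    exact mul_div_right_comm ρ (y k) (f k)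
  refine ⟨hsubst ▸ bijOn_mul_prodLevelSet hscale_pos hscale_prod (r ^ n), ?_⟩
  refine (integral_comp_mul_hypersphereCoord n r hscale_pos hscale_prod
    fun y => exp (-∑ k, f k * y k)).symm.trans ?_
  congr with x
  rw [neg_mul, Finset.mul_sum]
  congr 3 with k
  simp only [Pi.mul_apply]
  field_simp [(hf k).ne']

theorem substitution_preserves_hypersphere_and_integral
    (n : ℕ) (hn : 1 ≤ n) (r : ℝ) (hr : 0 < r)
    (f : Fin n → ℝ) (hf : ∀ k, 0 < f k) :
    -- the substitution `y_k ↦ ρ y_k / f_k` maps `M_{n,r}` bijectively onto itself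
    (Set.BijOn (fun y : Fin n → ℝ => fun k => (∏ j, f j) ^ ((1 : ℝ) / n) * y k / f k)
      {y : Fin n → ℝ | (∀ k, 0 < y k) ∧ ∏ k, y k = r ^ n}
      {y : Fin n → ℝ | (∀ k, 0 < y k) ∧ ∏ k, y k = r ^ n}) ∧
    -- consequently the Laplace transform depends only on the geometric mean:
    -- in the coordinates `x` on the hyperplane the measure `m_n` is Lebesgue measure
    (∫ x : Fin (n - 1) → ℝ,
        Real.exp (-∑ k : Fin n, f k * hypersphereCoord n r x k)) =
      ∫ x : Fin (n - 1) → ℝ,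
        Real.exp (-(∏ j, f j) ^ ((1 : ℝ) / n) *
          ∑ k : Fin n, hypersphereCoord n r x k) :=
  substitution_preserves_hypersphere_and_integral_general n r f hf
end
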